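/- For every integer n ≥ 4 there exists a tournament T on n vertices whose inversion index satisfies (i(T) : ℝ) ≥ (n−1)/2 − log₂ n. -/

import Mathlib

/-!
A counting argument. There are `2 ^ (n choose 2)` tournaments on `n` vertices. Any tournament
can be made acyclic by inversions (invert the two ends of a reversed arc, one arc at a time), and
a sequence of inversions is undone by the reversed sequence. So if every tournament had index at
most `k`, each would be determined by an acyclic tournament together with `k` vertex subsets. An
acyclic tournament is determined by its in-degree function, so there are at most `n ^ n` of them,
whence `2 ^ (n choose 2) ≤ n ^ n * 2 ^ (n * k)`, i.e. `k ≥ (n - 1) / 2 - log₂ n`.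
-/

/-- A tournament on a vertex set `V`: a loopless directed graph such that for all
distinct `x, y` exactly one of `(x,y)`, `(y,x)` is an arc. -/
structure Tournament (V : Type*) where
  rel : V → V → Prop
  irrefl : ∀ x, ¬ rel x x
  total : ∀ x y, x ≠ y → rel x y ∨ rel y x
  asymm : ∀ x y, rel x y → ¬ rel y x

namespace Tournament

variable {V : Type*} {W : Type*}

/-- The tournament obtained from `T` by reversing all arcs both of whose
endpoints lie in `X`. -/
def inv (T : Tournament V) (X : Set V) : Tournament V where
  rel x y := (x ∈ X ∧ y ∈ X ∧ T.rel y x) ∨ ((x ∉ X ∨ y ∉ X) ∧ T.rel x y)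
  irrefl x := by have := T.irrefl x; tauto
  total x y hxy := by
    have := T.total x y hxy
    by_cases hx : x ∈ X <;> by_cases hy : y ∈ X <;> tauto
  asymm x y := by have h1 := T.asymm x y; have h2 := T.asymm y x; tauto

/-- Successive inversions along a finite sequence of subsets (`X_0` first). -/
def invSeq (T : Tournament V) (Xs : List (Set V)) : Tournament V :=
  Xs.foldl Tournament.inv T

/-- A tournament is acyclic (transitive) when its arc relation is transitive,
i.e. a strict linear order. -/
def IsAcyclic (T : Tournament V) : Prop :=
  ∀ x y z, T.rel x y → T.rel y z → T.rel x z

/-- The inversion index: the least number of subsets to be inverted to reach an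
acyclic tournament. -/
noncomputable def index (T : Tournament V) : ℕ :=
  sInf {m | ∃ Xs : List (Set V), Xs.length = m ∧ (T.invSeq Xs).IsAcyclic}

/-- Induced subtournament on a set of vertices. -/
def restrict (T : Tournament V) (A : Set V) : Tournament A where
  rel x y := T.rel x y
  irrefl x := T.irrefl x
  total x y hxy := T.total x y (fun h => hxy (Subtype.ext h))
  asymm x y := T.asymm x y

/-- `T − x`: the subtournament induced on `V ∖ {x}`. -/
def erase (T : Tournament V) (x : V) : Tournament {y : V // y ≠ x} :=
  T.restrict {y | y ≠ x}

/-- `S` embeds into `T`: `S` is isomorphic to the subtournament of `T` induced on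
some subset of the vertices of `T`. -/
def Embeds (S : Tournament V) (T : Tournament W) : Prop :=
  ∃ f : V → W, Function.Injective f ∧ ∀ x y, S.rel x y ↔ T.rel (f x) (f y)

/-- Isomorphism of tournaments. -/
def Iso (S : Tournament V) (T : Tournament W) : Prop :=
  ∃ e : V ≃ W, ∀ x y, S.rel x y ↔ T.rel (e x) (e y)

/-- The dual tournament, obtained by reversing all arcs. -/
def dual (T : Tournament V) : Tournament V where
  rel x y := T.rel y x
  irrefl x := T.irrefl x
  total x y hxy := (T.total x y hxy).symm
  asymm x y h := T.asymm y x h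

/-- `X` is an interval of `T`. -/
def IsInterval (T : Tournament V) (X : Set V) : Prop :=
  ∀ y ∉ X, (∀ x ∈ X, T.rel x y) ∨ (∀ x ∈ X, T.rel y x)

/-- A tournament is indecomposable when all its intervals are trivial. -/
def Indecomposable (T : Tournament V) : Prop :=
  ∀ X : Set V, T.IsInterval X → X = ∅ ∨ X = Set.univ ∨ ∃ x, X = {x}

end Tournament

/-- The transitive tournament `n̲` on `{0, …, n−1}`, with arcs `(i,j)` for `i < j`. -/
def linear (n : ℕ) : Tournament (Fin n) where
  rel x y := x < y
  irrefl x := lt_irrefl x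
  total _ _ h := lt_or_gt_of_ne h
  asymm _ _ h := lt_asymm h

/-- `2ℕ_{<k} = {0, 2, …, 2(k−1)}` as a subset of `Fin N`. -/
def evensLT {N : ℕ} (k : ℕ) : Set (Fin N) := {i | (i : ℕ) % 2 = 0 ∧ (i : ℕ) < 2 * k}

/-- `2ℕ_{<k}+1 = {1, 3, …, 2k−1}` as a subset of `Fin N`. -/
def oddsLT {N : ℕ} (k : ℕ) : Set (Fin N) := {i | (i : ℕ) % 2 = 1 ∧ (i : ℕ) < 2 * k}

namespace Tournament

variable {V : Type*}

@[ext]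
theorem ext {S T : Tournament V} (h : ∀ x y, S.rel x y ↔ T.rel x y) : S = T := by
  obtain ⟨r, _, _, _⟩ := S
  obtain ⟨r', _, _, _⟩ := T
  obtain rfl : r = r' := funext fun x => funext fun y => propext (h x y)
  rfl

@[simp]
theorem inv_inv (T : Tournament V) (X : Set V) : (T.inv X).inv X = T := by
  ext x y
  simp only [inv]
  tauto

@[simp]
theorem inv_empty (T : Tournament V) : T.inv ∅ = T := by
  ext x y
  simp [inv]

@[simp]
theorem invSeq_nil (T : Tournament V) : T.invSeq [] = T := rfl

@[simp]
theorem invSeq_cons (T : Tournament V) (X : Set V) (Xs : List (Set V)) :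
    T.invSeq (X :: Xs) = (T.inv X).invSeq Xs := rfl

theorem invSeq_append (T : Tournament V) (Xs Ys : List (Set V)) :
    T.invSeq (Xs ++ Ys) = (T.invSeq Xs).invSeq Ys :=
  List.foldl_append ..

@[simp]
theorem invSeq_replicate_empty (T : Tournament V) (k : ℕ) :
    T.invSeq (List.replicate k ∅) = T := by
  induction k with
  | zero => rfl
  | succ k ih => rwa [List.replicate_succ, invSeq_cons, inv_empty]

@[simp]
theorem invSeq_invSeq_reverse (T : Tournament V) (Xs : List (Set V)) :
    (T.invSeq Xs).invSeq Xs.reverse = T := by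
  induction Xs generalizing T with
  | nil => rfl
  | cons X Xs ih => simp [invSeq_append, ih]

def disagreements (T S : Tournament V) : Set (V × V) :=
  {p | T.rel p.1 p.2 ∧ S.rel p.2 p.1}

theorem eq_of_disagreements_eq_empty {T S : Tournament V} (h : disagreements T S = ∅) :
    T = S := by
  have hT : ∀ x y, T.rel x y → S.rel x y := fun x y hxy ↦ by
    have hyx : ¬ S.rel y x := fun hyx ↦ Set.eq_empty_iff_forall_notMem.1 h (x, y) ⟨hxy, hyx⟩
    have hne : x ≠ y := by rintro rfl; exact T.irrefl x hxy
    exact (S.total x y hne).resolve_right hyx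
  ext x y
  refine ⟨hT x y, fun hxy ↦ ?_⟩
  have hne : x ≠ y := by rintro rfl; exact S.irrefl x hxy
  exact (T.total x y hne).resolve_right fun hyx ↦ S.asymm x y hxy (hT y x hyx)

theorem disagreements_inv_pair {T S : Tournament V} {a b : V}
    (hab : (a, b) ∈ disagreements T S) :
    disagreements (T.inv {a, b}) S = disagreements T S \ {(a, b)} := by
  obtain ⟨hT, hS⟩ : T.rel a b ∧ S.rel b a := hab
  ext ⟨x, y⟩
  simp only [disagreements, inv, Set.mem_ofPred_eq, Set.mem_sdiff, Set.mem_singleton_iff,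
    Set.mem_insert_iff, Prod.mk.injEq]
  have := T.asymm a b; have := S.asymm a b; have := T.irrefl a; have := T.irrefl b
  constructor
  · rintro ⟨⟨hx, hy, hyx⟩ | ⟨hout, hxy⟩, hSyx⟩
    · obtain ⟨rfl | rfl, rfl | rfl⟩ := And.intro hx hy <;> tauto
    · refine ⟨⟨hxy, hSyx⟩, ?_⟩
      rintro ⟨rfl, rfl⟩
      tauto
  · rintro ⟨⟨hxy, hSyx⟩, hne⟩
    refine ⟨Or.inr ⟨?_, hxy⟩, hSyx⟩
    by_contra! h
    obtain ⟨rfl | rfl, rfl | rfl⟩ := h <;> tauto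

theorem exists_invSeq_eq [Finite V] (T S : Tournament V) : ∃ Xs, T.invSeq Xs = S := by
  obtain h | ⟨⟨a, b⟩, hab⟩ := (disagreements T S).eq_empty_or_nonempty
  · exact ⟨[], eq_of_disagreements_eq_empty h⟩
  · obtain ⟨Xs, hXs⟩ := exists_invSeq_eq (T.inv {a, b}) S
    exact ⟨{a, b} :: Xs, hXs⟩
termination_by (disagreements T S).ncard
decreasing_by
  rw [disagreements_inv_pair hab]
  exact Set.ncard_sdiff_singleton_lt_of_mem hab

instance [Finite V] : Finite (Tournament V) :=
  Finite.of_injective rel fun _ _ h ↦ ext fun x y ↦ by rw [h]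

noncomputable def rank (T : Tournament V) (x : V) : ℕ :=
  {y | T.rel y x}.ncard

theorem rank_lt_card [Fintype V] (T : Tournament V) (x : V) : T.rank x < Fintype.card V := by
  rw [← Nat.card_eq_fintype_card]
  exact Set.ncard_lt_card fun h ↦ T.irrefl x (Set.eq_univ_iff_forall.1 h x)

theorem rank_lt_rank [Finite V] {T : Tournament V} (hT : T.IsAcyclic) {x y : V}
    (hxy : T.rel x y) : T.rank x < T.rank y :=
  Set.ncard_lt_ncard ⟨fun z hz ↦ hT z x y hz hxy, fun h ↦ T.irrefl x (h hxy)⟩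

theorem rel_iff_rank_lt [Finite V] {T : Tournament V} (hT : T.IsAcyclic) (x y : V) :
    T.rel x y ↔ T.rank x < T.rank y := by
  refine ⟨rank_lt_rank hT, fun h ↦ ?_⟩
  have hne : x ≠ y := by rintro rfl; exact lt_irrefl _ h
  exact (T.total x y hne).resolve_right fun hyx ↦ (rank_lt_rank hT hyx).not_gt h

theorem card_acyclic_le [Fintype V] :
    Nat.card {T : Tournament V // T.IsAcyclic} ≤ Fintype.card V ^ Fintype.card V := by
  have hinj : Function.Injective fun T : {T : Tournament V // T.IsAcyclic} ↦
      fun x ↦ (⟨T.1.rank x, T.1.rank_lt_card x⟩ : Fin (Fintype.card V)) := by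
    rintro ⟨S, hS⟩ ⟨T, hT⟩ h
    have hrank : ∀ x, S.rank x = T.rank x := fun x ↦ congrArg Fin.val (congrFun h x)
    ext1
    ext x y
    rw [rel_iff_rank_lt hS, rel_iff_rank_lt hT, hrank, hrank]
  calc _ ≤ Nat.card (V → Fin (Fintype.card V)) := Nat.card_le_card_of_injective _ hinj
    _ = Fintype.card V ^ Fintype.card V := by
      rw [Nat.card_fun, Nat.card_fin, Nat.card_eq_fintype_card]

section LinearOrder

variable [LinearOrder V]

variable (V) in
def ofLinearOrder : Tournament V where
  rel := (· < ·)
  irrefl := lt_irrefl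
  total _ _ := Ne.lt_or_gt
  asymm _ _ := lt_asymm

theorem isAcyclic_ofLinearOrder : (ofLinearOrder V).IsAcyclic :=
  fun _ _ _ ↦ lt_trans

theorem exists_invSeq_length_eq_index [Finite V] (T : Tournament V) :
    ∃ Xs, Xs.length = T.index ∧ (T.invSeq Xs).IsAcyclic := by
  obtain ⟨Xs, hXs⟩ := exists_invSeq_eq T (ofLinearOrder V)
  refine Nat.sInf_mem (s := {m | ∃ Xs, Xs.length = m ∧ (T.invSeq Xs).IsAcyclic})
    ⟨Xs.length, Xs, rfl, ?_⟩
  rw [hXs]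
  exact isAcyclic_ofLinearOrder

theorem exists_invSeq_length_eq_of_index_le [Finite V] {T : Tournament V} {k : ℕ}
    (hk : T.index ≤ k) : ∃ Xs, Xs.length = k ∧ (T.invSeq Xs).IsAcyclic := by
  obtain ⟨Xs, hlen, hXs⟩ := exists_invSeq_length_eq_index T
  refine ⟨Xs ++ List.replicate (k - T.index) ∅, by simp [hlen, hk], ?_⟩
  rwa [invSeq_append, invSeq_replicate_empty]

def ofOrientation (f : {z : Sym2 V // ¬ z.IsDiag} → Bool) : Tournament V where
  rel x y := ∃ h : x ≠ y, f ⟨s(x, y), Sym2.mk_isDiag_iff.not.2 h⟩ = decide (x < y)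
  irrefl _ := fun ⟨h, _⟩ ↦ h rfl
  total x y hxy := by
    by_cases hf : f ⟨s(x, y), Sym2.mk_isDiag_iff.not.2 hxy⟩ = decide (x < y)
    · exact Or.inl ⟨hxy, hf⟩
    · refine Or.inr ⟨hxy.symm, ?_⟩
      simp only [Sym2.eq_swap (a := y)]
      rcases hxy.lt_or_gt with h | h <;> simp_all [h.not_gt]
  asymm x y := by
    rintro ⟨hxy, hf⟩ ⟨_, hf'⟩
    simp only [Sym2.eq_swap (a := y), hf] at hf'
    rcases hxy.lt_or_gt with h | h <;> simp_all [h.not_gt]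

theorem ofOrientation_injective : Function.Injective (ofOrientation (V := V)) := by
  intro f g hfg
  funext ⟨z, hz⟩
  induction z using Sym2.ind with | _ x y => ?_
  have hxy : x ≠ y := Sym2.mk_isDiag_iff.not.1 hz
  have hrel : (ofOrientation f).rel x y ↔ (ofOrientation g).rel x y := by rw [hfg]
  simp only [ofOrientation, hxy, ne_eq, not_false_eq_true, exists_true_left] at hrel
  revert hrel
  cases f ⟨s(x, y), hz⟩ <;> cases g ⟨s(x, y), hz⟩ <;> simp [← not_le]

theorem two_pow_choose_two_le_card [Fintype V] :
    2 ^ (Fintype.card V).choose 2 ≤ Nat.card (Tournament V) := by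
  calc 2 ^ (Fintype.card V).choose 2 = Nat.card ({z : Sym2 V // ¬ z.IsDiag} → Bool) := by
        rw [Nat.card_eq_fintype_card, Fintype.card_fun, Fintype.card_bool,
          Sym2.card_subtype_not_diag]
    _ ≤ Nat.card (Tournament V) := Nat.card_le_card_of_injective _ ofOrientation_injective

theorem card_le_of_forall_index_le [Fintype V] {k : ℕ}
    (h : ∀ T : Tournament V, T.index ≤ k) :
    Nat.card (Tournament V) ≤ Fintype.card V ^ Fintype.card V * 2 ^ (Fintype.card V * k) := by
  have hsurj : Function.Surjective
      fun p : {T : Tournament V // T.IsAcyclic} × List.Vector (Set V) k ↦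
        p.1.1.invSeq p.2.toList := by
    intro T
    obtain ⟨Xs, hlen, hXs⟩ := exists_invSeq_length_eq_of_index_le (h T)
    exact ⟨(⟨_, hXs⟩, ⟨Xs.reverse, by simpa⟩), by simp⟩
  calc Nat.card (Tournament V)
      ≤ Nat.card ({T : Tournament V // T.IsAcyclic} × List.Vector (Set V) k) :=
        Nat.card_le_card_of_surjective _ hsurj
    _ = Nat.card {T : Tournament V // T.IsAcyclic} * 2 ^ (Fintype.card V * k) := by
      rw [Nat.card_prod, Nat.card_eq_fintype_card (α := List.Vector _ _), card_vector,
        Fintype.card_set, ← pow_mul]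
    _ ≤ Fintype.card V ^ Fintype.card V * 2 ^ (Fintype.card V * k) :=
      Nat.mul_le_mul_right _ card_acyclic_le

end LinearOrder

end Tournament

theorem sub_logb_le_of_two_pow_choose_two_le {n k : ℕ} (hn : 0 < n)
    (h : 2 ^ n.choose 2 ≤ n ^ n * 2 ^ (n * k)) :
    ((n : ℝ) - 1) / 2 - Real.logb 2 n ≤ k := by
  have hn' : (0 : ℝ) < n := by exact_mod_cast hn
  have hlog : (n * (n - 1) / 2 : ℝ) ≤ n * (Real.logb 2 n + k) := by
    have hcast : (2 : ℝ) ^ n.choose 2 ≤ (n : ℝ) ^ n * 2 ^ (n * k) := by exact_mod_cast h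
    have := Real.logb_le_logb_of_le (b := 2) one_lt_two (by positivity) hcast
    rwa [Real.logb_mul (by positivity) (by positivity), Real.logb_pow, Real.logb_pow,
      Real.logb_pow, Real.logb_self_eq_one one_lt_two, Nat.cast_choose_two, Nat.cast_mul,
      mul_one, mul_one, ← mul_add] at this
  have hdiv : ((n : ℝ) - 1) / 2 ≤ Real.logb 2 n + k := by
    rw [mul_div_assoc] at hlog
    exact le_of_mul_le_mul_left hlog hn'
  linarith

/-- for every `n ≥ 4` there is a tournament on `n` vertices whose
inversion index is at least `(n−1)/2 − log₂ n`. -/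
theorem exists_index_ge (n : ℕ) (hn : 4 ≤ n) :
    ∃ T : Tournament (Fin n),
      ((n : ℝ) - 1) / 2 - Real.logb 2 (n : ℝ) ≤ (T.index : ℝ) := by
  have : Nonempty (Tournament (Fin n)) := ⟨linear n⟩
  obtain ⟨T, hT⟩ := Finite.exists_max (Tournament.index : Tournament (Fin n) → ℕ)
  refine ⟨T, sub_logb_le_of_two_pow_choose_two_le (by omega) ?_⟩
  simpa using
    Tournament.two_pow_choose_two_le_card.trans (Tournament.card_le_of_forall_index_le hT)
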